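/- arXiv:2501.10962 — 5 statements merged into one kernel-verified Lean document; each statement's English description precedes it below -/
import Mathlib

section
/- Let H = {h₁,…,h_d} be a non-empty finite set of non-negative integers. For every prime p, the natural density η_p^H of the set N_{{p}}^H = {n ∈ ℕ : λ_{{p}}(n+h₁)⋯λ_{{p}}(n+h_d) = -1} exists. -/
open Filter Topology
open scoped symmDiff Classical

/-- `Ω_P(n)`: number of prime factors of `n` (with multiplicity) lying in `P`. -/
noncomputable def OmegaP (P : Set ℕ) (n : ℕ) : ℕ :=
  n.factorization.sum fun p k => if p ∈ P then k else 0

/-- `λ_P`, the completely multiplicative function equal to `-1` at primes in `P`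
and `1` at all other primes. -/
noncomputable def lambdaP (P : Set ℕ) (n : ℕ) : ℝ :=
  (-1 : ℝ) ^ OmegaP P n

/-- `Λ_P^H(n) = ∏_{h ∈ H} λ_P(n + h)` (empty product is `1`). -/
noncomputable def LambdaPH (P : Set ℕ) (H : Finset ℕ) (n : ℕ) : ℝ :=
  ∏ h ∈ H, lambdaP P (n + h)

/-- `N_P^H = {n : Λ_P^H(n) = -1}`. -/
def NPH (P : Set ℕ) (H : Finset ℕ) : Set ℕ :=
  {n : ℕ | LambdaPH P H n = -1}

/-- Number of elements of `A` in `[1, x]`. -/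
noncomputable def countIn (A : Set ℕ) (x : ℕ) : ℕ :=
  ((Finset.Icc 1 x).filter (fun n => n ∈ A)).card

/-- `A ⊆ ℕ` has natural density `d`: `|A ∩ [1,x]|/x → d`. -/
def HasDensity (A : Set ℕ) (d : ℝ) : Prop :=
  Filter.Tendsto (fun x : ℕ => (countIn A x : ℝ) / x) Filter.atTop (nhds d)

/-- The Cesàro average `(1/x) ∑_{n ≤ x} Λ_P^H(n)`. -/
noncomputable def cesaroAvg (P : Set ℕ) (H : Finset ℕ) (x : ℕ) : ℝ :=
  (∑ n ∈ Finset.Icc 1 x, LambdaPH P H n) / x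

/-- A set of naturals is small if the sum of reciprocals of its elements converges. -/
def SmallSet (P : Set ℕ) : Prop :=
  Summable fun p : P => (1 : ℝ) / (p : ℝ)

/-- `C(r,s) = {n : n ≡ -r (mod s)}`. -/
def Cset (r s : ℕ) : Set ℕ :=
  {n : ℕ | (n : ℤ) ≡ -(r : ℤ) [ZMOD (s : ℤ)]}

/-- The set of `P`-smooth positive integers. -/
def SmoothP (P : Set ℕ) : Set ℕ :=
  {n : ℕ | 0 < n ∧ ∀ p : ℕ, p.Prime → p ∣ n → p ∈ P}

/-- `𝒜_P`: all finite unions of sets from `{∅} ∪ {C(r,n) : r ∈ ℕ, n ∈ S_P}`. -/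
def calA (P : Set ℕ) : Set (Set ℕ) :=
  {A : Set ℕ | ∃ F : Finset (ℕ × ℕ), (∀ q ∈ F, q.2 ∈ SmoothP P) ∧
    A = ⋃ q ∈ F, Cset q.1 q.2}

/-!
Let `D_K` be the set of `n` such that `p ^ K` divides `n + h` for some `h ∈ H`. Off `D_K`
every valuation `v_p(n + h)` is below `K` and hence depends only on `n mod p ^ K`, so
`N_{{p}}^H \ D_K` is periodic modulo `p ^ K`. Periodic sets have a natural density, and `D_K`
is itself periodic with at most `|H|` residues modulo `p ^ K`, so its density is at most
`|H| / p ^ K`. As `N_{{p}}^H` lies between `N_{{p}}^H \ D_K` and `(N_{{p}}^H \ D_K) ∪ D_K`,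
letting `K → ∞` makes its counting ratios a Cauchy sequence.
-/

open Function Nat Finset

theorem Nat.factorization_eq_of_modEq {p K a b : ℕ} (hp : p.Prime) (hab : a ≡ b [MOD p ^ K])
    (ha : ¬ p ^ K ∣ a) : a.factorization p = b.factorization p := by
  have hb : ¬ p ^ K ∣ b := (hab.dvd_iff dvd_rfl).not.mp ha
  have hdvd : ∀ v, p ^ v ∣ a ↔ p ^ v ∣ b := fun v => by
    rcases le_or_gt v K with hv | hv
    · exact hab.dvd_iff (pow_dvd_pow p hv)
    · exact iff_of_false (fun h => ha ((pow_dvd_pow p hv.le).trans h))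
        (fun h => hb ((pow_dvd_pow p hv.le).trans h))
  refine eq_of_forall_le_iff fun v => ?_
  rw [← hp.pow_dvd_iff_le_factorization (by rintro rfl; exact ha (dvd_zero _)),
    ← hp.pow_dvd_iff_le_factorization (by rintro rfl; exact hb (dvd_zero _)), hdvd]

lemma lambdaP_singleton (p n : ℕ) : lambdaP {p} n = (-1) ^ n.factorization p := by
  rw [lambdaP, OmegaP, Finsupp.sum, Finset.sum_eq_single p]
  · simp
  · intro q _ hq
    simp [hq]
  · intro hp
    simp [Finsupp.notMem_support_iff.mp hp]

lemma LambdaPH_singleton_eq_of_modEq {p K n n' : ℕ} (hp : p.Prime) (H : Finset ℕ)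
    (hn : n ≡ n' [MOD p ^ K]) (hH : ∀ h ∈ H, ¬ p ^ K ∣ n + h) :
    LambdaPH {p} H n = LambdaPH {p} H n' :=
  Finset.prod_congr rfl fun h hh => by
    rw [lambdaP_singleton, lambdaP_singleton,
      factorization_eq_of_modEq hp (hn.add_right h) (hH h hh)]

lemma countIn_eq_count (A : Set ℕ) (x : ℕ) : countIn A x = count (fun k => k + 1 ∈ A) x := by
  rw [countIn, count_eq_card_filter_range]
  refine card_nbij' (· - 1) (· + 1) ?_ ?_ ?_ ?_ <;> intro k hk <;>
    simp only [mem_coe, mem_filter, mem_Icc, mem_range] at hk ⊢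
  · rw [Nat.sub_add_cancel hk.1.1]
    exact ⟨by omega, hk.2⟩
  · exact ⟨⟨by omega, by omega⟩, hk.2⟩
  · omega
  · omega

lemma countIn_mono {A B : Set ℕ} (h : A ⊆ B) (x : ℕ) : countIn A x ≤ countIn B x :=
  card_le_card (monotone_filter_right _ fun _ _ => @h _)

lemma countIn_union_le (A B : Set ℕ) (x : ℕ) :
    countIn (A ∪ B) x ≤ countIn A x + countIn B x := by
  rw [countIn, countIn, countIn]
  simp only [Set.mem_union, filter_or]
  exact card_union_le _ _

section Periodic

variable {p : ℕ → Prop} [DecidablePred p] {m : ℕ}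

lemma count_shift_of_periodic (hp : Periodic p m) (q n : ℕ) :
    count (fun k => p (q * m + k)) n = count p n := by
  have hq : ∀ k, p (k + q * m) = p k := by simpa using hp.nat_mul q
  simp only [add_comm (q * m), hq]

lemma count_mul_of_periodic (hp : Periodic p m) (q : ℕ) : count p (q * m) = q * count p m := by
  induction q with
  | zero => simp
  | succ q ih =>
    rw [add_one_mul, count_add, ih, count_shift_of_periodic hp, add_one_mul]

lemma abs_count_sub_le_of_periodic (hm : 0 < m) (hp : Periodic p m) (x : ℕ) :
    |(count p x : ℝ) - x * count p m / m| ≤ count p m := by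
  obtain ⟨q, r, hr, rfl⟩ : ∃ q r, r < m ∧ x = q * m + r :=
    ⟨x / m, x % m, mod_lt x hm, (Nat.div_add_mod' x m).symm⟩
  have hm' : (0 : ℝ) < m := by exact_mod_cast hm
  have hcount : (count p (q * m + r) : ℝ) - (q * m + r : ℕ) * count p m / m
      = count p r - r * count p m / m := by
    rw [count_add, count_mul_of_periodic hp, count_shift_of_periodic hp]
    push_cast
    field_simp
    ring
  rw [hcount]
  refine abs_sub_le_of_nonneg_of_le (by positivity) (by exact_mod_cast count_monotone p hr.le)
    (by positivity) ?_
  rw [div_le_iff₀ hm', mul_comm]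
  gcongr

lemma tendsto_count_div_of_periodic (hm : 0 < m) (hp : Periodic p m) :
    Tendsto (fun x : ℕ => (count p x : ℝ) / x) atTop (𝓝 (count p m / m)) := by
  rw [tendsto_iff_norm_sub_tendsto_zero]
  refine squeeze_zero_norm' ?_ (tendsto_const_div_atTop_nhds_zero_nat (count p m : ℝ))
  filter_upwards [eventually_gt_atTop 0] with x hx
  have hx' : (0 : ℝ) < x := by exact_mod_cast hx
  have hm' : (0 : ℝ) < m := by exact_mod_cast hm
  rw [norm_norm, Real.norm_eq_abs]
  have hdiff : (count p x : ℝ) / x - count p m / m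
      = ((count p x : ℝ) - x * count p m / m) / x := by
    field_simp
  rw [hdiff, abs_div, abs_of_pos hx']
  exact div_le_div_of_nonneg_right (abs_count_sub_le_of_periodic hm hp x) hx'.le

end Periodic

lemma hasDensity_of_periodic {A : Set ℕ} {m : ℕ} (hm : 0 < m) (hA : Periodic (· ∈ A) m) :
    HasDensity A (countIn A m / m) := by
  have hA' : Periodic (fun k => k + 1 ∈ A) m := fun k => by
    simpa only [add_right_comm k m 1] using hA (k + 1)
  simpa only [HasDensity, countIn_eq_count] using tendsto_count_div_of_periodic hm hA'

lemma exists_hasDensity_of_sandwich {S : Set ℕ}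
    (h : ∀ ε > 0, ∃ (A B : Set ℕ) (a b : ℝ),
      A ⊆ S ∧ S ⊆ A ∪ B ∧ HasDensity A a ∧ HasDensity B b ∧ b < ε) :
    ∃ d, HasDensity S d := by
  refine cauchySeq_tendsto_of_complete (Metric.cauchySeq_iff'.2 fun ε hε => ?_)
  obtain ⟨A, B, a, b, hAS, hSAB, hA, hB, hb⟩ := h (ε / 2) (half_pos hε)
  have hclose := (hA.eventually (Metric.ball_mem_nhds a (by positivity : 0 < ε / 6))).and
    (hB.eventually (Metric.ball_mem_nhds b (by positivity : 0 < ε / 6)))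
  obtain ⟨N, hN⟩ := eventually_atTop.1 hclose
  have hsandwich : ∀ n ≥ N, a - ε / 6 < (countIn S n : ℝ) / n ∧
      (countIn S n : ℝ) / n < a + b + ε / 3 := fun n hn => by
    obtain ⟨hAn, hBn⟩ := hN n hn
    rw [Real.dist_eq, abs_lt] at hAn hBn
    have hlow : (countIn A n : ℝ) / n ≤ countIn S n / n := by
      gcongr
      exact_mod_cast countIn_mono hAS n
    have hup : (countIn S n : ℝ) / n ≤ countIn A n / n + countIn B n / n := by
      rw [← add_div]
      gcongr
      exact_mod_cast (countIn_mono hSAB n).trans (countIn_union_le A B n)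
    constructor <;> linarith
  refine ⟨N, fun n hn => ?_⟩
  obtain ⟨h1, h2⟩ := hsandwich n hn
  obtain ⟨h3, h4⟩ := hsandwich N le_rfl
  rw [Real.dist_eq, abs_lt]
  constructor <;> linarith

def shiftDvdSet (m : ℕ) (H : Finset ℕ) : Set ℕ := {n | ∃ h ∈ H, m ∣ n + h}

lemma periodic_mem_shiftDvdSet (m : ℕ) (H : Finset ℕ) : Periodic (· ∈ shiftDvdSet m H) m :=
  fun n => by
    simp only [shiftDvdSet, Set.mem_ofPred_eq, add_right_comm n m, Nat.dvd_add_self_right]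

lemma countIn_shiftDvdSet_le (m : ℕ) (H : Finset ℕ) :
    countIn (shiftDvdSet m H) m ≤ H.card := by
  have hsub : (Icc 1 m).filter (· ∈ shiftDvdSet m H)
      ⊆ H.biUnion fun h => (Icc 1 m).filter (m ∣ · + h) := by
    intro n hn
    simp only [mem_filter, mem_biUnion] at hn ⊢
    obtain ⟨hIcc, h, hh, hdvd⟩ := hn
    exact ⟨h, hh, hIcc, hdvd⟩
  have hsingle : ∀ h, ((Icc 1 m).filter (m ∣ · + h)).card ≤ 1 := fun h => by
    refine card_le_one.2 fun a ha b hb => ?_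
    simp only [mem_filter, mem_Icc] at ha hb
    have hab : a + h ≡ b + h [MOD m] :=
      (Nat.modEq_zero_iff_dvd.2 ha.2).trans (Nat.modEq_zero_iff_dvd.2 hb.2).symm
    exact (Nat.ModEq.add_right_cancel' h hab).eq_of_abs_lt
      (abs_sub_lt_iff.2 ⟨by omega, by omega⟩)
  calc countIn (shiftDvdSet m H) m ≤ ∑ h ∈ H, ((Icc 1 m).filter (m ∣ · + h)).card :=
        (card_le_card hsub).trans card_biUnion_le
    _ ≤ ∑ _h ∈ H, 1 := sum_le_sum fun h _ => hsingle h
    _ = H.card := by rw [sum_const, smul_eq_mul, mul_one]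

lemma periodic_mem_NPH_diff_shiftDvdSet {p : ℕ} (hp : p.Prime) (H : Finset ℕ) (K : ℕ) :
    Periodic (· ∈ NPH {p} H \ shiftDvdSet (p ^ K) H) (p ^ K) := fun n => by
  have hD := periodic_mem_shiftDvdSet (p ^ K) H n
  simp only [Set.mem_sdiff, hD]
  by_cases hn : n ∈ shiftDvdSet (p ^ K) H
  · simp only [hn, not_true_eq_false, and_false]
  · have hshift : ∀ h ∈ H, ¬ p ^ K ∣ n + p ^ K + h := fun h hh hdvd =>
      hn ⟨h, hh, by rwa [add_right_comm, Nat.dvd_add_self_right] at hdvd⟩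
    simp only [NPH, Set.mem_ofPred_eq,
      LambdaPH_singleton_eq_of_modEq hp H (Nat.add_modEq_left_iff.2 dvd_rfl) hshift]

theorem stmt_0_general (H : Finset ℕ) (p : ℕ) (hp : p.Prime) :
    ∃ d : ℝ, HasDensity (NPH {p} H) d := by
  refine exists_hasDensity_of_sandwich fun ε hε => ?_
  obtain ⟨K, hK⟩ :=
    pow_unbounded_of_one_lt (H.card / ε) (by exact_mod_cast hp.one_lt : (1 : ℝ) < p)
  have hm : 0 < p ^ K := pow_pos hp.pos K
  refine ⟨_, _, _, _, Set.sdiff_subset, Set.subset_sdiff_union _ _,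
    hasDensity_of_periodic hm (periodic_mem_NPH_diff_shiftDvdSet hp H K),
    hasDensity_of_periodic hm (periodic_mem_shiftDvdSet (p ^ K) H), ?_⟩
  calc (countIn (shiftDvdSet (p ^ K) H) (p ^ K) : ℝ) / (p ^ K : ℕ)
        ≤ H.card / (p ^ K : ℕ) := by
        gcongr
        exact_mod_cast countIn_shiftDvdSet_le (p ^ K) H
    _ < ε := by
        rw [div_lt_iff₀ (by positivity)]
        push_cast
        rwa [div_lt_iff₀ hε, mul_comm] at hK

/-- For a non-empty finite set `H` of non-negative integers and every
prime `p`, the natural density `η_p^H` of `N_{{p}}^H` exists. -/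
theorem stmt_0 (H : Finset ℕ) (hH : H.Nonempty) (p : ℕ) (hp : p.Prime) :
    ∃ d : ℝ, HasDensity (NPH {p} H) d :=
  stmt_0_general H p hp
end

section
/- Let H = {h₁,…,h_d} be a non-empty finite set of non-negative integers and let P be a small set of primes (the sum of reciprocals of the elements of P converges). Then the limit κ_P^H := lim_{x→∞} (1/x) Σ_{n≤x} λ_P(n+h₁)⋯λ_P(n+h_d) exists and equals the (possibly infinite, convergent) product ∏_{p∈P} (1 − 2η_p^H). -/
/-!
For finite `S ⊆ P`, `Λ_P^H (n) = Λ_S^H (n)` unless `p ∣ n + h` for some `p ∈ P \ S` and `h ∈ H`;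
for `n ≤ x` this happens at most `2 |H| x ∑_{p ∈ P \ S, p ≤ 2x} 1 / p` times, which is a small
proportion since `P` is small, so it suffices to treat finite `S`. Capping every `p`-adic valuation
at `K` makes `Λ_S^H` periodic modulo `∏_{p ∈ S} p ^ K` while changing it only where some
`p ^ K ∣ n + h`. By the Chinese remainder theorem the mean of this periodic function is the product
of the means of its `p`-components, each within `4 |H| p ^ (-K)` of `1 - 2 η_p`. The same counting
gives `|η_p| ≤ 2 |H| / p`, so the product converges.
-/

open Filter Topology
open scoped symmDiff Classical

open Finset Function

noncomputable def cesaro (f : ℕ → ℝ) (x : ℕ) : ℝ :=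
  (∑ n ∈ Icc 1 x, f n) / x

theorem tendsto_of_forall_approx {α : Type*} {l : Filter α} {a : α → ℝ} {L : ℝ}
    (h : ∀ ε > 0, ∃ b : α → ℝ, ∃ M, Tendsto b l (𝓝 M) ∧ (∀ᶠ x in l, |a x - b x| ≤ ε) ∧
      |M - L| ≤ ε) :
    Tendsto a l (𝓝 L) := by
  refine Metric.tendsto_nhds.2 fun ε hε => ?_
  obtain ⟨b, M, hb, hab, hML⟩ := h (ε / 4) (by positivity)
  filter_upwards [hab, Metric.tendsto_nhds.1 hb (ε / 4) (by positivity)] with x hax hbx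
  rw [Real.dist_eq] at hbx ⊢
  linarith [abs_sub_le (a x) (b x) M, abs_sub_le (a x) M L]

theorem abs_sub_le_of_tendsto {α : Type*} {l : Filter α} [l.NeBot] {a b : α → ℝ} {A B c : ℝ}
    (ha : Tendsto a l (𝓝 A)) (hb : Tendsto b l (𝓝 B)) (hab : ∀ᶠ x in l, |a x - b x| ≤ c) :
    |A - B| ≤ c :=
  le_of_tendsto (ha.sub hb).abs hab

theorem abs_cesaro_le_one {f : ℕ → ℝ} (hf : ∀ n, |f n| ≤ 1) (x : ℕ) : |cesaro f x| ≤ 1 := by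
  rw [cesaro, abs_div, Nat.abs_cast]
  refine div_le_one_of_le₀ ((abs_sum_le_sum_abs _ _).trans ?_) x.cast_nonneg
  exact (sum_le_card_nsmul _ _ 1 fun n _ => hf n).trans (by simp)

theorem abs_le_one_of_tendsto_cesaro {f : ℕ → ℝ} {c : ℝ} (hf : ∀ n, |f n| ≤ 1)
    (h : Tendsto (cesaro f) atTop (𝓝 c)) : |c| ≤ 1 :=
  le_of_tendsto' h.abs (abs_cesaro_le_one hf)

theorem sum_range_add_eq_of_periodic {R : Type*} [AddCancelCommMonoid R] {f : ℕ → R} {M : ℕ}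
    (hf : Periodic f M) (x : ℕ) : ∑ n ∈ range M, f (x + n) = ∑ n ∈ range M, f n := by
  induction x with
  | zero => simp
  | succ x ih =>
    have h := sum_range_succ (fun n => f (x + n)) M
    rw [sum_range_succ', hf x, ih, add_zero] at h
    simpa only [add_assoc, add_comm 1] using (add_right_cancel h)

theorem tendsto_cesaro_of_periodic {f : ℕ → ℝ} {M : ℕ} (hf : Periodic f M) (hM : 0 < M) :
    Tendsto (cesaro f) atTop (𝓝 ((∑ n ∈ range M, f n) / M)) := by
  set T := (∑ n ∈ range M, f n) / M
  -- the deviation of the partial sums from linear growth is periodic, hence bounded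
  set g : ℕ → ℝ := fun x => ∑ n ∈ range x, f (1 + n) - x * T
  have hg : Periodic g M := fun x => by
    have hM' : (M : ℝ) ≠ 0 := by positivity
    simp only [g, T, sum_range_add, ← add_assoc, sum_range_add_eq_of_periodic hf]
    field_simp
    push_cast
    ring
  obtain ⟨C, hC⟩ : BddAbove (Set.range fun x => |g x|) := by
    refine ((Set.finite_range fun k : Fin M => |g k|).bddAbove).mono ?_
    rintro _ ⟨x, rfl⟩
    exact ⟨⟨x % M, Nat.mod_lt x hM⟩, by simp [hg.map_mod_nat]⟩
  have hcesaro : ∀ᶠ x in atTop, T + g x / x = cesaro f x := by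
    filter_upwards [eventually_gt_atTop 0] with x hx
    rw [cesaro, ← Finset.Ico_add_one_right_eq_Icc, sum_Ico_eq_sum_range]
    simp only [g, add_tsub_cancel_right]
    field_simp
    ring
  have hdecay : Tendsto (fun x : ℕ => g x / x) atTop (𝓝 0) :=
    squeeze_zero_norm (fun x => by
      rw [norm_div, Real.norm_eq_abs, RCLike.norm_natCast]
      exact div_le_div_of_nonneg_right (hC ⟨x, rfl⟩) x.cast_nonneg)
      (tendsto_const_div_atTop_nhds_zero_nat C)
  simpa using (tendsto_const_nhds.add hdecay).congr' hcesaro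

theorem periodic_prod_of_periodic {ι R : Type*} [CommMonoid R] (s : Finset ι) {m : ι → ℕ}
    {f : ι → ℕ → R} (hf : ∀ i ∈ s, Periodic (f i) (m i)) :
    Periodic (fun n => ∏ i ∈ s, f i n) (∏ i ∈ s, m i) := fun n =>
  prod_congr rfl fun i hi => by
    obtain ⟨k, hk⟩ := dvd_prod_of_mem m hi
    rw [hk, mul_comm]
    exact (hf i hi).nat_mul k n

theorem sum_range_mul_of_periodic_of_coprime {R : Type*} [CommSemiring R] {a b : ℕ}
    (hab : a.Coprime b) {f g : ℕ → R} (hf : Periodic f a) (hg : Periodic g b) :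
    ∑ n ∈ range (a * b), f n * g n = (∑ i ∈ range a, f i) * ∑ j ∈ range b, g j := by
  rcases a.eq_zero_or_pos with rfl | ha
  · simp
  rcases b.eq_zero_or_pos with rfl | hb
  · simp
  rw [sum_mul_sum, ← sum_product']
  have hmaps : Set.MapsTo (fun n => (n % a, n % b)) (range (a * b))
      (range a ×ˢ range b : Finset (ℕ × ℕ)) :=
    fun n _ => by simp [Nat.mod_lt _ ha, Nat.mod_lt _ hb]
  have hinj : Set.InjOn (fun n => (n % a, n % b)) (range (a * b)) := by
    intro n hn k hk hnk
    simp only [coe_range, Set.mem_Iio, Prod.mk.injEq] at hn hk hnk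
    have := (Nat.modEq_and_modEq_iff_modEq_mul hab).1 hnk
    rwa [Nat.ModEq, Nat.mod_eq_of_lt hn, Nat.mod_eq_of_lt hk] at this
  refine sum_nbij _ (fun n hn => hmaps hn) hinj
    (surjOn_of_injOn_of_card_le _ hmaps hinj (by simp)) fun n _ => ?_
  simp [hf.map_mod_nat, hg.map_mod_nat]

theorem sum_range_prod_of_periodic {ι R : Type*} [CommSemiring R] (s : Finset ι) {m : ι → ℕ}
    (hm : (s : Set ι).Pairwise (Nat.Coprime on m)) {f : ι → ℕ → R}
    (hf : ∀ i ∈ s, Periodic (f i) (m i)) :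
    ∑ n ∈ range (∏ i ∈ s, m i), ∏ i ∈ s, f i n = ∏ i ∈ s, ∑ n ∈ range (m i), f i n := by
  classical
  induction s using Finset.induction_on with
  | empty => simp
  | insert j s hj ih =>
    rw [coe_insert, Set.pairwise_insert] at hm
    have hcop : (m j).Coprime (∏ i ∈ s, m i) :=
      Nat.Coprime.prod_right fun i hi => (hm.2 i hi fun h => hj (h ▸ hi)).1
    simp only [prod_insert hj]
    rw [sum_range_mul_of_periodic_of_coprime hcop (hf j (mem_insert_self j s))
      (periodic_prod_of_periodic s fun i hi => hf i (mem_insert_of_mem hi)),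
      ih hm.1 fun i hi => hf i (mem_insert_of_mem hi)]

theorem tendsto_cesaro_prod_of_periodic {ι : Type*} (s : Finset ι) {m : ι → ℕ}
    (hm0 : ∀ i ∈ s, 0 < m i) (hm : (s : Set ι).Pairwise (Nat.Coprime on m)) {f : ι → ℕ → ℝ}
    (hf : ∀ i ∈ s, Periodic (f i) (m i)) :
    Tendsto (cesaro fun n => ∏ i ∈ s, f i n) atTop
      (𝓝 (∏ i ∈ s, (∑ n ∈ range (m i), f i n) / m i)) := by
  simpa [sum_range_prod_of_periodic s hm hf, prod_div_distrib] using
    tendsto_cesaro_of_periodic (periodic_prod_of_periodic s hf) (prod_pos hm0)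

theorem card_filter_dvd_add_le (m h x : ℕ) : #{n ∈ Icc 1 x | m ∣ n + h} ≤ (x + h) / m := by
  rw [← Nat.Ioc_filter_dvd_card_eq_div]
  refine card_le_card_of_injOn (· + h) (fun n hn => ?_) fun _ _ _ _ => Nat.add_right_cancel
  simp only [coe_filter, mem_Icc, Set.mem_ofPred_eq, mem_Ioc] at hn ⊢
  omega

theorem abs_sum_sub_sum_le_two_mul_card {ι : Type*} (s : Finset ι) {a b : ι → ℝ}
    (ha : ∀ i, |a i| ≤ 1) (hb : ∀ i, |b i| ≤ 1) :
    |∑ i ∈ s, a i - ∑ i ∈ s, b i| ≤ 2 * #{i ∈ s | a i ≠ b i} := by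
  classical
  rw [← sum_sub_distrib]
  refine (abs_sum_le_sum_abs _ _).trans ?_
  rw [← sum_filter_of_ne fun i _ h => sub_ne_zero.1 (abs_ne_zero.1 h), mul_comm,
    ← nsmul_eq_mul]
  exact sum_le_card_nsmul _ _ _ fun i _ =>
    (abs_sub _ _).trans (by linarith [ha i, hb i])

theorem card_filter_ne_le {ι : Type*} {a b : ℕ → ℝ} (H : Finset ℕ) (s : Finset ι) (m : ι → ℕ)
    (x : ℕ) (hab : ∀ n ∈ Icc 1 x, (∀ i ∈ s, ∀ h ∈ H, ¬ m i ∣ n + h) → a n = b n) :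
    #{n ∈ Icc 1 x | a n ≠ b n} ≤ ∑ i ∈ s, ∑ h ∈ H, (x + h) / m i := by
  classical
  calc #{n ∈ Icc 1 x | a n ≠ b n}
      ≤ #(s.biUnion fun i => H.biUnion fun h => {n ∈ Icc 1 x | m i ∣ n + h}) := by
        refine card_le_card fun n hn => ?_
        rw [mem_filter] at hn
        by_contra hnot
        refine hn.2 (hab n hn.1 fun i hi h hh hdvd => hnot ?_)
        simpa only [mem_biUnion, mem_filter] using ⟨i, hi, h, hh, hn.1, hdvd⟩
    _ ≤ ∑ i ∈ s, ∑ h ∈ H, #{n ∈ Icc 1 x | m i ∣ n + h} :=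
        card_biUnion_le.trans (sum_le_sum fun _ _ => card_biUnion_le)
    _ ≤ ∑ i ∈ s, ∑ h ∈ H, (x + h) / m i :=
        sum_le_sum fun i _ => sum_le_sum fun h _ => card_filter_dvd_add_le _ _ _

theorem abs_cesaro_sub_le {ι : Type*} {a b : ℕ → ℝ} (ha : ∀ n, |a n| ≤ 1) (hb : ∀ n, |b n| ≤ 1)
    (H : Finset ℕ) (s : Finset ι) (m : ι → ℕ) {x : ℕ} (hx : ∀ h ∈ H, h ≤ x)
    (hab : ∀ n ∈ Icc 1 x, (∀ i ∈ s, ∀ h ∈ H, ¬ m i ∣ n + h) → a n = b n) :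
    |cesaro a x - cesaro b x| ≤ 4 * #H * ∑ i ∈ s, 1 / (m i : ℝ) := by
  rcases x.eq_zero_or_pos with rfl | hx0
  · simp only [cesaro, CharP.cast_eq_zero, div_zero, sub_self, abs_zero]
    positivity
  rw [cesaro, cesaro, ← sub_div, abs_div, Nat.abs_cast, div_le_iff₀ (by positivity)]
  calc |∑ n ∈ Icc 1 x, a n - ∑ n ∈ Icc 1 x, b n|
      ≤ 2 * #{n ∈ Icc 1 x | a n ≠ b n} := abs_sum_sub_sum_le_two_mul_card _ ha hb
    _ ≤ 2 * ∑ i ∈ s, ∑ h ∈ H, (((x + h) / m i : ℕ) : ℝ) := by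
        gcongr
        exact_mod_cast card_filter_ne_le H s m x hab
    _ ≤ 2 * ∑ i ∈ s, ∑ h ∈ H, 2 * x * (1 / (m i : ℝ)) := by
        gcongr with i _ h hh
        refine Nat.cast_div_le.trans ?_
        rw [mul_one_div]
        gcongr
        push_cast
        linarith [(Nat.cast_le (α := ℝ)).2 (hx h hh)]
    _ = 4 * #H * (∑ i ∈ s, 1 / (m i : ℝ)) * x := by
        simp only [sum_const, nsmul_eq_mul, mul_sum, sum_mul]
        ring_nf

theorem abs_prod_sub_prod_le {ι : Type*} (s : Finset ι) {a b : ι → ℝ}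
    (ha : ∀ i ∈ s, |a i| ≤ 1) (hb : ∀ i ∈ s, |b i| ≤ 1) :
    |∏ i ∈ s, a i - ∏ i ∈ s, b i| ≤ ∑ i ∈ s, |a i - b i| := by
  classical
  induction s using Finset.induction_on with
  | empty => simp
  | insert j s hj ih =>
    simp only [mem_insert, forall_eq_or_imp] at ha hb
    rw [prod_insert hj, prod_insert hj, sum_insert hj]
    have hbs : |∏ i ∈ s, b i| ≤ 1 := by
      rw [abs_prod]
      exact prod_le_one (fun _ _ => abs_nonneg _) hb.2
    calc |a j * ∏ i ∈ s, a i - b j * ∏ i ∈ s, b i|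
        = |a j * (∏ i ∈ s, a i - ∏ i ∈ s, b i) + (a j - b j) * ∏ i ∈ s, b i| := by ring_nf
      _ ≤ |a j| * |∏ i ∈ s, a i - ∏ i ∈ s, b i| + |a j - b j| * |∏ i ∈ s, b i| := by
        rw [← abs_mul, ← abs_mul]
        exact abs_add_le _ _
      _ ≤ 1 * ∑ i ∈ s, |a i - b i| + |a j - b j| * 1 := by
        gcongr
        exacts [ha.1, ih ha.2 hb.2]
      _ = |a j - b j| + ∑ i ∈ s, |a i - b i| := by ring

theorem lambdaP_eq_of_subset {P Q : Set ℕ} (hQP : Q ⊆ P) {n : ℕ}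
    (hn : ∀ p ∈ P, p ∉ Q → ¬ p ∣ n) : lambdaP P n = lambdaP Q n := by
  unfold lambdaP OmegaP
  congr 1
  refine Finsupp.sum_congr fun p hp => ?_
  have hpn : p ∣ n := Nat.dvd_of_mem_primeFactors (by rwa [← Nat.support_factorization])
  by_cases hQ : p ∈ Q
  · simp [hQ, hQP hQ]
  · have hP : p ∉ P := fun hP => hn p hP hQ hpn
    simp [hQ, hP]

theorem LambdaPH_eq_of_subset {P Q : Set ℕ} (hQP : Q ⊆ P) {H : Finset ℕ} {n : ℕ}
    (hn : ∀ p ∈ P, p ∉ Q → ∀ h ∈ H, ¬ p ∣ n + h) : LambdaPH P H n = LambdaPH Q H n :=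
  prod_congr rfl fun h hh => lambdaP_eq_of_subset hQP fun p hP hQ => hn p hP hQ h hh

theorem lambdaP_finset (S : Finset ℕ) (n : ℕ) :
    lambdaP S n = ∏ p ∈ S, (-1 : ℝ) ^ n.factorization p := by
  rw [lambdaP, prod_pow_eq_pow_sum, OmegaP, Finsupp.sum]
  simp only [mem_coe]
  rw [sum_ite_mem, inter_comm]
  congr 1
  refine sum_subset inter_subset_left fun p hpS hp => ?_
  simpa [hpS] using Finsupp.notMem_support_iff.1 fun h => hp (mem_inter.2 ⟨hpS, h⟩)

theorem abs_LambdaPH (P : Set ℕ) (H : Finset ℕ) (n : ℕ) : |LambdaPH P H n| = 1 := by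
  simp [LambdaPH, lambdaP, abs_prod]

theorem tendsto_cesaroAvg_of_hasDensity {P : Set ℕ} {H : Finset ℕ} {d : ℝ}
    (h : HasDensity (NPH P H) d) : Tendsto (cesaroAvg P H) atTop (𝓝 (1 - 2 * d)) := by
  have hΛ : ∀ n, LambdaPH P H n = 1 - 2 * if n ∈ NPH P H then 1 else 0 := fun n => by
    rcases (abs_eq zero_le_one).1 (abs_LambdaPH P H n) with h | h <;> norm_num [NPH, h]
  have hcesaro : ∀ᶠ x in atTop,
      1 - 2 * ((countIn (NPH P H) x : ℝ) / x) = cesaroAvg P H x := by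
    filter_upwards [eventually_gt_atTop 0] with x hx
    simp only [cesaroAvg, hΛ, sum_sub_distrib, ← mul_sum, sum_boole, countIn]
    field_simp
    simp
  exact (tendsto_const_nhds.sub (h.const_mul 2)).congr' hcesaro

theorem eventually_forall_le (H : Finset ℕ) : ∀ᶠ x in atTop, ∀ h ∈ H, h ≤ x :=
  (eventually_all_finset H).2 fun h _ => eventually_ge_atTop h

theorem abs_le_of_hasDensity_NPH_singleton {p : ℕ} {H : Finset ℕ} {η : ℝ}
    (h : HasDensity (NPH {p} H) η) : |η| ≤ 2 * #H * (1 / p) := by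
  have hone : Tendsto (cesaro fun _ => 1) atTop (𝓝 1) := by
    simpa using tendsto_cesaro_of_periodic (f := fun _ => (1 : ℝ)) (fun _ => rfl) one_pos
  have hclose := abs_sub_le_of_tendsto (tendsto_cesaroAvg_of_hasDensity h) hone
    (c := 4 * #H * ∑ i ∈ {p}, 1 / (i : ℝ)) ?_
  · rw [sum_singleton, sub_sub_cancel_left, abs_neg, abs_mul, abs_two] at hclose
    linarith
  filter_upwards [eventually_forall_le H] with x hx
  refine abs_cesaro_sub_le (fun n => (abs_LambdaPH _ _ n).le) (by simp) H {p} id hx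
    fun n _ hn => prod_eq_one fun h hh => ?_
  have hpn : ¬ p ∣ n + h := hn p (mem_singleton_self p) h hh
  rw [← coe_singleton, lambdaP_finset, prod_singleton,
    Nat.factorization_eq_zero_of_not_dvd hpn, pow_zero]

/-- `Λ_{p}^H` with the `p`-adic valuations capped at `K` (as `v_p (gcd (p ^ K) m) = min (v_p m) K`),
which makes it periodic modulo `p ^ K`. -/
noncomputable def cappedLambdaH (p K : ℕ) (H : Finset ℕ) (n : ℕ) : ℝ :=
  ∏ h ∈ H, (-1 : ℝ) ^ (Nat.gcd (p ^ K) (n + h)).factorization p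

theorem periodic_cappedLambdaH (p K : ℕ) (H : Finset ℕ) :
    Periodic (cappedLambdaH p K H) (p ^ K) := fun n => by
  simp only [cappedLambdaH, add_right_comm n (p ^ K), Nat.gcd_add_self_right]

theorem abs_cappedLambdaH (p K : ℕ) (H : Finset ℕ) (n : ℕ) : |cappedLambdaH p K H n| = 1 := by
  simp [cappedLambdaH, abs_prod]

theorem factorization_gcd_pow_of_not_dvd {p K k : ℕ} (hp : p.Prime) (hk : ¬ p ^ K ∣ k) :
    (Nat.gcd (p ^ K) k).factorization p = k.factorization p := by
  have hk0 : k ≠ 0 := by rintro rfl; exact hk (dvd_zero _)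
  rw [Nat.factorization_gcd (pow_ne_zero _ hp.ne_zero) hk0, Finsupp.inf_apply,
    hp.factorization_pow, Finsupp.single_eq_same]
  exact min_eq_right (le_of_lt (not_le.1 ((hp.pow_dvd_iff_le_factorization hk0).not.1 hk)))

theorem LambdaPH_eq_prod_cappedLambdaH {S : Finset ℕ} (hS : ∀ p ∈ S, p.Prime) (K : ℕ)
    {H : Finset ℕ} {n : ℕ} (hn : ∀ p ∈ S, ∀ h ∈ H, ¬ p ^ K ∣ n + h) :
    LambdaPH S H n = ∏ p ∈ S, cappedLambdaH p K H n := by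
  unfold LambdaPH cappedLambdaH
  rw [Finset.prod_comm]
  refine prod_congr rfl fun h hh => ?_
  rw [lambdaP_finset]
  exact prod_congr rfl fun p hp => by rw [factorization_gcd_pow_of_not_dvd (hS p hp) (hn p hp h hh)]

theorem abs_mean_cappedLambdaH_sub_le {p : ℕ} (hp : p.Prime) (K : ℕ) {H : Finset ℕ} {η : ℝ}
    (h : HasDensity (NPH {p} H) η) :
    |(∑ n ∈ range (p ^ K), cappedLambdaH p K H n) / (p ^ K : ℕ) - (1 - 2 * η)| ≤
      4 * #H * (1 / ((p ^ K : ℕ) : ℝ)) := by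
  refine abs_sub_le_of_tendsto
    (tendsto_cesaro_of_periodic (periodic_cappedLambdaH p K H) (pow_pos hp.pos K))
    (tendsto_cesaroAvg_of_hasDensity h) ?_
  filter_upwards [eventually_forall_le H] with x hx
  have hclose := abs_cesaro_sub_le (fun n => (abs_cappedLambdaH p K H n).le)
    (fun n => (abs_LambdaPH {p} H n).le) H {p} (· ^ K) hx fun n _ hn => by
      have := LambdaPH_eq_prod_cappedLambdaH (S := {p}) (by simpa) K hn
      rw [coe_singleton, prod_singleton] at this
      exact this.symm
  rwa [sum_singleton] at hclose

theorem tendsto_sum_one_div_pow_atTop {S : Finset ℕ} (hS : ∀ p ∈ S, 1 < p) :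
    Tendsto (fun K => ∑ p ∈ S, 1 / ((p ^ K : ℕ) : ℝ)) atTop (𝓝 0) := by
  have h := tendsto_finsetSum S fun p hp => tendsto_pow_atTop_nhds_zero_of_lt_one
    (one_div_nonneg.2 (Nat.cast_nonneg p : (0 : ℝ) ≤ p))
    ((div_lt_one (Nat.cast_pos.2 (zero_lt_one.trans (hS p hp)))).2 (Nat.one_lt_cast.2 (hS p hp)))
  simpa using h

theorem tendsto_cesaroAvg_finset {H S : Finset ℕ} (hS : ∀ p ∈ S, p.Prime) {η : ℕ → ℝ}
    (hη : ∀ p ∈ S, HasDensity (NPH {p} H) (η p)) :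
    Tendsto (cesaroAvg S H) atTop (𝓝 (∏ p ∈ S, (1 - 2 * η p))) := by
  refine tendsto_of_forall_approx fun ε hε => ?_
  obtain ⟨K, hK⟩ := (((tendsto_sum_one_div_pow_atTop fun p hp => (hS p hp).one_lt).const_mul
    (4 * (#H : ℝ))).eventually (ge_mem_nhds (by simpa using hε))).exists
  have hcop : (S : Set ℕ).Pairwise (Nat.Coprime on fun p => p ^ K) := fun p hp q hq hpq =>
    Nat.Coprime.pow K K ((Nat.coprime_primes (hS p hp) (hS q hq)).2 hpq)
  refine ⟨cesaro fun n => ∏ p ∈ S, cappedLambdaH p K H n,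
    ∏ p ∈ S, (∑ n ∈ range (p ^ K), cappedLambdaH p K H n) / (p ^ K : ℕ),
    tendsto_cesaro_prod_of_periodic S (fun p hp => pow_pos (hS p hp).pos K) hcop
      fun p _ => periodic_cappedLambdaH p K H, ?_, ?_⟩
  · filter_upwards [eventually_forall_le H] with x hx
    refine (abs_cesaro_sub_le (fun n => (abs_LambdaPH _ H n).le) (fun n => ?_) H S (· ^ K) hx
      fun n _ hn => LambdaPH_eq_prod_cappedLambdaH hS K hn).trans hK
    simp [abs_prod, abs_cappedLambdaH]
  · refine (abs_prod_sub_prod_le S (fun p hp => ?_) (fun p hp => ?_)).trans (le_trans ?_ hK)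
    · exact abs_le_one_of_tendsto_cesaro (fun n => (abs_cappedLambdaH p K H n).le)
        (tendsto_cesaro_of_periodic (periodic_cappedLambdaH p K H) (pow_pos (hS p hp).pos K))
    · exact abs_le_one_of_tendsto_cesaro (fun n => (abs_LambdaPH _ H n).le)
        (tendsto_cesaroAvg_of_hasDensity (hη p hp))
    · rw [mul_sum]
      exact sum_le_sum fun p hp => abs_mean_cappedLambdaH_sub_le (hS p hp) K (hη p hp)

theorem multipliable_one_sub_two_mul {P : Set ℕ} (hsmall : SmallSet P) {H : Finset ℕ}
    {η : ℕ → ℝ} (hη : ∀ p ∈ P, HasDensity (NPH {p} H) (η p)) :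
    Multipliable fun p : P => 1 - 2 * η p := by
  have hsum : Summable fun p : P => -(2 * η p) := by
    unfold SmallSet at hsmall
    refine (hsmall.mul_left (4 * (#H : ℝ))).of_norm_bounded fun p => ?_
    rw [norm_neg, norm_mul, Real.norm_eq_abs, Real.norm_eq_abs, abs_two]
    linarith [abs_le_of_hasDensity_NPH_singleton (hη p p.2)]
  simpa [sub_eq_add_neg] using Real.multipliable_one_add_of_summable hsum

theorem abs_cesaroAvg_sub_cesaroAvg_le {P Q : Set ℕ} (hQP : Q ⊆ P) {H : Finset ℕ} {x : ℕ}
    (hx : ∀ h ∈ H, h ≤ x) {t : Finset ℕ} (ht : ∀ p ∈ P, p ∉ Q → p ≤ 2 * x → p ∈ t) :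
    |cesaroAvg P H x - cesaroAvg Q H x| ≤ 4 * #H * ∑ p ∈ t, 1 / (p : ℝ) :=
  abs_cesaro_sub_le (fun n => (abs_LambdaPH P H n).le) (fun n => (abs_LambdaPH Q H n).le) H t id
    hx fun n hn hnt => LambdaPH_eq_of_subset hQP fun p hP hQ h hh hdvd => by
      have hpx : p ≤ 2 * x := by
        have := Nat.le_of_dvd (by grind) hdvd
        grind
      exact hnt p (ht p hP hQ hpx) h hh hdvd

theorem eventually_abs_cesaroAvg_sub_le {P : Set ℕ} (H : Finset ℕ) {s : Finset P} {c : ℝ}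
    (hs : ∀ t : Finset P, Disjoint t s → ∑ p ∈ t, 1 / ((p : ℕ) : ℝ) < c) :
    ∀ᶠ x in atTop,
      |cesaroAvg P H x - cesaroAvg (s.map (Embedding.subtype _)) H x| ≤ 4 * #H * c := by
  filter_upwards [eventually_forall_le H] with x hx
  set t : Finset P := (range (2 * x + 1)).subtype (· ∈ P) \ s
  refine (abs_cesaroAvg_sub_cesaroAvg_le (by simp) hx (t := t.map (Embedding.subtype _))
    fun p hp hpS hpx => ?_).trans ?_
  · simp only [coe_map, Embedding.coe_subtype, Set.mem_image, mem_coe, not_exists,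
      not_and] at hpS
    simp only [t, Finset.mem_map, Finset.mem_sdiff, mem_subtype, mem_range]
    exact ⟨⟨p, hp⟩, ⟨Nat.lt_succ_of_le hpx, fun h => hpS _ h rfl⟩, rfl⟩
  · rw [sum_map]
    gcongr
    exact (hs t disjoint_sdiff_self_left).le

theorem stmt_1_general (H : Finset ℕ) (P : Set ℕ)
    (hP : ∀ q ∈ P, Nat.Prime q) (hsmall : SmallSet P)
    (η : ℕ → ℝ) (hη : ∀ p ∈ P, HasDensity (NPH {p} H) (η p)) :
    ∃ κ : ℝ, HasProd (fun p : P => 1 - 2 * η p) κ ∧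
      Filter.Tendsto (cesaroAvg P H) Filter.atTop (nhds κ) := by
  have hκ := (multipliable_one_sub_two_mul hsmall hη).hasProd
  refine ⟨_, hκ, tendsto_of_forall_approx fun ε hε => ?_⟩
  obtain ⟨s₀, hs₀⟩ := Metric.tendsto_atTop.1 hκ ε hε
  obtain ⟨s₁, hs₁⟩ := hsmall.vanishing (Iio_mem_nhds (by positivity : 0 < ε / (4 * #H + 1)))
  have hSP : ((s₀ ∪ s₁).map (Embedding.subtype _) : Set ℕ) ⊆ P := by simp
  refine ⟨cesaroAvg ((s₀ ∪ s₁).map (Embedding.subtype _)) H,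
    ∏ p ∈ (s₀ ∪ s₁).map (Embedding.subtype _), (1 - 2 * η p),
    tendsto_cesaroAvg_finset (fun p hp => hP p (hSP hp)) fun p hp => hη p (hSP hp), ?_, ?_⟩
  · filter_upwards [eventually_abs_cesaroAvg_sub_le H
      fun t ht => hs₁ t (ht.mono_right subset_union_right)] with x hx
    refine hx.trans ?_
    rw [mul_div_assoc']
    exact div_le_of_le_mul₀ (by positivity) hε.le (by linarith)
  · rw [prod_map, ← Real.dist_eq]
    exact (hs₀ _ subset_union_left).le

/-- If `P` is a small set of primes, then `κ_P^H` exists and equals the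
(convergent) product `∏_{p ∈ P} (1 - 2 η_p^H)`. -/
theorem stmt_1 (H : Finset ℕ) (hH : H.Nonempty) (P : Set ℕ)
    (hP : ∀ q ∈ P, Nat.Prime q) (hsmall : SmallSet P)
    (η : ℕ → ℝ) (hη : ∀ p ∈ P, HasDensity (NPH {p} H) (η p)) :
    ∃ κ : ℝ, HasProd (fun p : P => 1 - 2 * η p) κ ∧
      Filter.Tendsto (cesaroAvg P H) Filter.atTop (nhds κ) :=
  stmt_1_general H P hP hsmall η hη
end

section
/- Let H = {h₁,…,h_d} be a finite set of d distinct non-negative integers and let p be a prime that does not divide h_i − h_j for any pair of distinct elements h_i, h_j ∈ H (a non-exceptional prime). Then η_p^H = d/(p+1). -/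
open Filter Topology
open scoped symmDiff Classical

open Asymptotics in
section
variable {p : ℕ} {H : Finset ℕ}

noncomputable def Ocnt (p y : ℕ) : ℕ :=
  ((Finset.Icc 1 y).filter (fun m => Odd (padicValNat p m))).card

lemma Ocnt_le (p y : ℕ) : Ocnt p y ≤ y := by
  have := Finset.card_filter_le (Finset.Icc 1 y) (fun m => Odd (padicValNat p m))
  simpa [Ocnt, Nat.card_Icc] using this

lemma Ocnt_mono (p : ℕ) {y z : ℕ} (h : y ≤ z) : Ocnt p y ≤ Ocnt p z :=
  Finset.card_le_card (Finset.filter_subset_filter _ (Finset.Icc_subset_Icc_right h))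

lemma padic_dvd_of_odd {m : ℕ} (h : Odd (padicValNat p m)) : p ∣ m := by
  have h1 : padicValNat p m ≠ 0 := by
    intro h0; rw [h0] at h; exact (Nat.not_odd_iff_even.2 Even.zero) h
  exact dvd_trans (dvd_pow_self p h1) pow_padicValNat_dvd

lemma Ocnt_rec (hp : p.Prime) (y : ℕ) : Ocnt p y = y / p - Ocnt p (y / p) := by
  haveI := Fact.mk hp
  have hp0 : 0 < p := hp.pos
  have hbij : Ocnt p y
      = ((Finset.Icc 1 (y / p)).filter (fun m => ¬ Odd (padicValNat p m))).card := by
    apply Finset.card_bij' (fun m _ => m / p) (fun m _ => p * m)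
    · intro m hm
      simp only [Finset.mem_filter, Finset.mem_Icc] at hm ⊢
      obtain ⟨⟨hm1, hm2⟩, hodd⟩ := hm
      have hdvd : p ∣ m := padic_dvd_of_odd hodd
      obtain ⟨k, hk⟩ := hdvd
      have hk0 : k ≠ 0 := by rintro rfl; omega
      have hval : padicValNat p m = 1 + padicValNat p k := by
        rw [hk, padicValNat.mul (by positivity) hk0, padicValNat.self hp.one_lt]
      refine ⟨⟨?_, Nat.div_le_div_right hm2⟩, ?_⟩
      · rw [hk, Nat.mul_div_cancel_left _ hp0]; omega
      · rw [hk, Nat.mul_div_cancel_left _ hp0]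
        rw [hval] at hodd
        intro ho
        obtain ⟨a, ha⟩ := ho
        obtain ⟨b, hb⟩ := hodd
        omega
    · intro m hm
      simp only [Finset.mem_filter, Finset.mem_Icc] at hm ⊢
      obtain ⟨⟨hm1, hm2⟩, heven⟩ := hm
      have hval : padicValNat p (p * m) = 1 + padicValNat p m := by
        rw [padicValNat.mul (by positivity) (by omega), padicValNat.self hp.one_lt]
      refine ⟨⟨Nat.mul_pos hp0 (by omega), ?_⟩, ?_⟩
      · calc p * m = m * p := Nat.mul_comm _ _
          _ ≤ y := (Nat.le_div_iff_mul_le hp0).1 hm2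
      · rw [hval]; rw [Nat.not_odd_iff_even] at heven
        rcases heven with ⟨k, hk⟩
        exact ⟨k, by omega⟩
    · intro m hm
      simp only [Finset.mem_filter, Finset.mem_Icc] at hm
      exact Nat.mul_div_cancel' (padic_dvd_of_odd hm.2)
    · intro m _
      exact Nat.mul_div_cancel_left _ hp0
  have hsplit := Finset.card_filter_add_card_filter_not
    (s := Finset.Icc 1 (y / p)) (p := fun m => Odd (padicValNat p m))
  rw [Nat.card_Icc] at hsplit
  rw [hbij]
  have : Ocnt p (y / p) = ((Finset.Icc 1 (y / p)).filter
      (fun m => Odd (padicValNat p m))).card := rfl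
  omega

lemma Ocnt_bound (hp : p.Prime) (y : ℕ) :
    |(Ocnt p y : ℝ) - y / (p + 1)| ≤ Nat.log p y + 1 := by
  induction y using Nat.strong_induction_on with
  | _ y ih =>
    have hp1 : (0:ℝ) < (p:ℝ) + 1 := by positivity
    rcases lt_or_ge y p with hy | hy
    · have h0 : Ocnt p y = 0 := by
        have := Ocnt_rec hp y
        rw [Nat.div_eq_of_lt hy] at this
        simpa [Ocnt] using this
      rw [h0, Nat.cast_zero]
      have h1 : |(0:ℝ) - y / (p+1)| = y / (p+1) := by
        rw [zero_sub, abs_neg, abs_of_nonneg (by positivity)]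
      rw [h1]
      have : (y:ℝ) / (p+1) ≤ 1 := by
        rw [div_le_one hp1]
        have : (y:ℝ) ≤ p := by exact_mod_cast hy.le
        linarith
      have hl : (0:ℝ) ≤ Nat.log p y := by positivity
      linarith
    · set t := y / p with ht
      have htlt : t < y := Nat.div_lt_self (lt_of_lt_of_le hp.pos hy) hp.one_lt
      have hOle : Ocnt p t ≤ t := Ocnt_le p t
      have hrec : (Ocnt p y : ℝ) = (t : ℝ) - Ocnt p t := by
        rw [Ocnt_rec hp y, ← ht, Nat.cast_sub hOle]
      have hmod : (y : ℝ) - (t : ℝ) * p = ((y % p : ℕ) : ℝ) := by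
        have h := Nat.div_add_mod y p
        rw [← ht] at h
        have h' : (p : ℝ) * (t : ℝ) + ((y % p : ℕ) : ℝ) = (y : ℝ) := by exact_mod_cast h
        linarith
      have hmodlt : ((y % p : ℕ) : ℝ) < p := by
        exact_mod_cast Nat.mod_lt y hp.pos
      have hE := ih t htlt
      have hlogpos : 0 < Nat.log p y := Nat.log_pos hp.one_lt hy
      have hlogt : (Nat.log p t : ℝ) = (Nat.log p y : ℝ) - 1 := by
        rw [ht, Nat.log_div_base, Nat.cast_sub hlogpos]
        simp
      have hkey : (Ocnt p y : ℝ) - y / (p+1)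
          = ((t : ℝ) * p - y) / (p+1) - ((Ocnt p t : ℝ) - t / (p+1)) := by
        rw [hrec]; field_simp; ring
      rw [hkey]
      have h2 : |((t : ℝ) * p - y) / (p+1)| ≤ 1 := by
        rw [abs_div, abs_of_pos hp1, div_le_one hp1]
        have hge : (0:ℝ) ≤ (y:ℝ) - (t:ℝ)*p := by
          rw [hmod]; positivity
        rw [abs_sub_comm, abs_of_nonneg hge]
        linarith
      calc |((t : ℝ) * p - y) / (p+1) - ((Ocnt p t : ℝ) - t / (p+1))|
          ≤ |((t : ℝ) * p - y) / (p+1)| + |(Ocnt p t : ℝ) - t / (p+1)| := abs_sub _ _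
        _ ≤ 1 + ((Nat.log p t : ℝ) + 1) := by linarith
        _ = (Nat.log p y : ℝ) + 1 := by rw [hlogt]; ring

lemma log_div_tendsto (hp : p.Prime) :
    Tendsto (fun y : ℕ => ((Nat.log p y : ℝ) + 1) / y) atTop (𝓝 0) := by
  have hlog2 : (0:ℝ) < Real.log 2 := Real.log_pos (by norm_num)
  have hlo : (fun t : ℝ => Real.log t / Real.log 2 + 2) =o[atTop] id := by
    refine IsLittleO.add ?_ ?_
    · have := Real.isLittleO_log_id_atTop.const_mul_left (Real.log 2)⁻¹
      simpa [div_eq_inv_mul] using this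
    · exact isLittleO_const_id_atTop 2
  have h1 : Tendsto (fun t : ℝ => (Real.log t / Real.log 2 + 2) / t) atTop (𝓝 0) :=
    hlo.tendsto_div_nhds_zero
  have h2 : Tendsto (fun y : ℕ => (Real.log y / Real.log 2 + 2) / y) atTop (𝓝 0) :=
    h1.comp tendsto_natCast_atTop_atTop
  apply squeeze_zero' ?_ ?_ h2
  · filter_upwards with y; positivity
  · filter_upwards [eventually_ge_atTop 1] with y hy
    have hy0 : (0:ℝ) < y := by exact_mod_cast hy
    have hL : (Nat.log p y : ℝ) ≤ Real.log y / Real.log 2 := by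
      rw [le_div_iff₀ hlog2]
      have hpow : (2:ℕ) ^ Nat.log p y ≤ y := by
        calc (2:ℕ) ^ Nat.log p y ≤ p ^ Nat.log p y :=
              Nat.pow_le_pow_left hp.two_le _
          _ ≤ y := Nat.pow_log_le_self p (by omega)
      have hpow' : (2:ℝ) ^ Nat.log p y ≤ (y:ℝ) := by exact_mod_cast hpow
      calc (Nat.log p y : ℝ) * Real.log 2 = Real.log ((2:ℝ) ^ Nat.log p y) := by
            rw [Real.log_pow]
        _ ≤ Real.log y := Real.log_le_log (by positivity) hpow'
    gcongr
    linarith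

lemma Ocnt_tendsto (hp : p.Prime) :
    Tendsto (fun y : ℕ => (Ocnt p y : ℝ) / y) atTop (𝓝 (1 / ((p:ℝ) + 1))) := by
  have hp1 : (0:ℝ) < (p:ℝ) + 1 := by positivity
  have hz : Tendsto (fun y : ℕ => (Ocnt p y : ℝ) / y - 1 / ((p:ℝ)+1)) atTop (𝓝 0) := by
    apply squeeze_zero_norm' ?_ (log_div_tendsto hp)
    filter_upwards [eventually_ge_atTop 1] with y hy
    have hy0 : (0:ℝ) < y := by exact_mod_cast hy
    have heq : (Ocnt p y : ℝ) / y - 1 / ((p:ℝ)+1)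
        = ((Ocnt p y : ℝ) - y / ((p:ℝ)+1)) / y := by
      field_simp
    rw [Real.norm_eq_abs, heq, abs_div, abs_of_pos hy0]
    gcongr
    exact Ocnt_bound hp y
  have := hz.add (tendsto_const_nhds (x := 1 / ((p:ℝ)+1)))
  simpa using this




lemma OmegaP_singleton (hp : p.Prime) (n : ℕ) : OmegaP {p} n = padicValNat p n := by
  unfold OmegaP
  rw [Finsupp.sum]
  simp only [Set.mem_singleton_iff]
  rw [Finset.sum_ite_eq' n.factorization.support p (fun q => n.factorization q)]
  by_cases h : p ∈ n.factorization.support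
  · rw [if_pos h, Nat.factorization_def n hp]
  · rw [if_neg h]
    have := Finsupp.notMem_support_iff.1 h
    rw [Nat.factorization_def n hp] at this
    omega

lemma mem_NPH_iff (hp : p.Prime) (n : ℕ) :
    n ∈ NPH {p} H ↔ Odd (∑ h ∈ H, padicValNat p (n + h)) := by
  unfold NPH LambdaPH lambdaP
  simp only [Set.mem_setOf_eq]
  have hcong : ∀ h ∈ H, (-1 : ℝ) ^ OmegaP {p} (n + h)
      = (-1 : ℝ) ^ padicValNat p (n + h) := fun h _ => by
    rw [OmegaP_singleton hp]
  rw [Finset.prod_congr rfl hcong, Finset.prod_pow_eq_pow_sum]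
  constructor
  · intro heq
    rcases Nat.even_or_odd (∑ h ∈ H, padicValNat p (n + h)) with he | ho
    · rw [he.neg_one_pow] at heq; norm_num at heq
    · exact ho
  · intro ho
    rw [ho.neg_one_pow]

lemma odd_sum_iff (hp : p.Prime)
    (hnonexc : ∀ a ∈ H, ∀ b ∈ H, a ≠ b → ¬ ((p : ℤ) ∣ (a : ℤ) - (b : ℤ))) (n : ℕ) :
    Odd (∑ h ∈ H, padicValNat p (n + h)) ↔ ∃ h ∈ H, Odd (padicValNat p (n + h)) := by
  constructor
  · intro hodd
    by_contra hc
    push_neg at hc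
    have : Even (∑ h ∈ H, padicValNat p (n + h)) :=
      Finset.even_sum _ (fun h hh => Nat.not_odd_iff_even.1 (hc h hh))
    exact (Nat.not_odd_iff_even.2 this) hodd
  · rintro ⟨h, hh, ho⟩
    have hzero : ∀ b ∈ H, b ≠ h → padicValNat p (n + b) = 0 := by
      intro b hb hbh
      by_contra hne
      have hdb : p ∣ n + b := dvd_trans (dvd_pow_self p hne) pow_padicValNat_dvd
      have hdh : p ∣ n + h := padic_dvd_of_odd ho
      have : (p : ℤ) ∣ (b : ℤ) - (h : ℤ) := by
        have h1 : (p : ℤ) ∣ ((n : ℤ) + b) := by exact_mod_cast Int.natCast_dvd_natCast.2 hdb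
        have h2 : (p : ℤ) ∣ ((n : ℤ) + h) := by exact_mod_cast Int.natCast_dvd_natCast.2 hdh
        have := dvd_sub h1 h2
        simpa using this
      exact hnonexc b hb h hh hbh this
    rw [Finset.sum_eq_single h hzero (fun hnh => absurd hh hnh)]
    exact ho

lemma count_eq (hp : p.Prime)
    (hnonexc : ∀ a ∈ H, ∀ b ∈ H, a ≠ b → ¬ ((p : ℤ) ∣ (a : ℤ) - (b : ℤ))) (x : ℕ) :
    countIn (NPH {p} H) x
      = ∑ h ∈ H, ((Finset.Icc 1 x).filter (fun n => Odd (padicValNat p (n + h)))).card := by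
  unfold countIn
  have hset : (Finset.Icc 1 x).filter (fun n => n ∈ NPH {p} H)
      = H.biUnion (fun h => (Finset.Icc 1 x).filter (fun n => Odd (padicValNat p (n + h)))) := by
    ext n
    simp only [Finset.mem_filter, Finset.mem_biUnion, mem_NPH_iff hp, odd_sum_iff hp hnonexc]
    tauto
  rw [hset]
  apply Finset.card_biUnion
  intro a ha b hb hab
  rw [Function.onFun, Finset.disjoint_left]
  intro n hna hnb
  simp only [Finset.mem_filter] at hna hnb
  have hda : p ∣ n + a := padic_dvd_of_odd hna.2
  have hdb : p ∣ n + b := padic_dvd_of_odd hnb.2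
  apply hnonexc a ha b hb hab
  have h1 : (p : ℤ) ∣ ((n : ℤ) + a) := by exact_mod_cast Int.natCast_dvd_natCast.2 hda
  have h2 : (p : ℤ) ∣ ((n : ℤ) + b) := by exact_mod_cast Int.natCast_dvd_natCast.2 hdb
  have := dvd_sub h1 h2
  simpa using this

lemma Dcnt_eq (p h x : ℕ) :
    ((Finset.Icc 1 x).filter (fun n => Odd (padicValNat p (n + h)))).card
      = Ocnt p (x + h) - Ocnt p h := by
  have hsub : (Finset.Icc 1 h).filter (fun m => Odd (padicValNat p m))
      ⊆ (Finset.Icc 1 (x + h)).filter (fun m => Odd (padicValNat p m)) :=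
    Finset.filter_subset_filter _ (Finset.Icc_subset_Icc_right (Nat.le_add_left _ _))
  unfold Ocnt
  rw [← Finset.card_sdiff_of_subset hsub]
  apply Finset.card_bij (fun n _ => n + h)
  · intro n hn
    simp only [Finset.mem_filter, Finset.mem_Icc, Finset.mem_sdiff] at hn ⊢
    obtain ⟨⟨hn1, hn2⟩, hodd⟩ := hn
    exact ⟨⟨⟨by omega, by omega⟩, hodd⟩, by intro hmem; exact absurd hmem.1.2 (by omega)⟩
  · intro n₁ h₁ n₂ h₂ heq
    omega
  · intro m hm
    simp only [Finset.mem_sdiff, Finset.mem_filter, Finset.mem_Icc] at hm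
    obtain ⟨⟨⟨hm1, hm2⟩, hodd⟩, hnot⟩ := hm
    have hgt : h < m := by
      by_contra hle
      exact hnot ⟨⟨hm1, by omega⟩, hodd⟩
    refine ⟨m - h, ?_, by omega⟩
    simp only [Finset.mem_filter, Finset.mem_Icc]
    have : m - h + h = m := by omega
    rw [this]
    exact ⟨⟨by omega, by omega⟩, hodd⟩

end

/-- If `p` is a prime dividing no nonzero difference of elements of `H`
(a non-exceptional prime), then `η_p^H = d/(p+1)` where `d = |H|`. -/
theorem stmt_2 (H : Finset ℕ) (p : ℕ) (hp : p.Prime)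
    (hnonexc : ∀ a ∈ H, ∀ b ∈ H, a ≠ b → ¬ ((p : ℤ) ∣ (a : ℤ) - (b : ℤ))) :
    HasDensity (NPH {p} H) ((H.card : ℝ) / ((p : ℝ) + 1)) := by
  haveI := Fact.mk hp
  have hcount : ∀ x : ℕ, (countIn (NPH {p} H) x : ℝ)
      = ∑ h ∈ H, ((Ocnt p (x + h) : ℝ) - Ocnt p h) := by
    intro x
    rw [count_eq hp hnonexc x, Nat.cast_sum]
    refine Finset.sum_congr rfl fun h _ => ?_
    rw [Dcnt_eq p h x, Nat.cast_sub (Ocnt_mono p (Nat.le_add_left h x))]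
  have hterm : ∀ h ∈ H, Filter.Tendsto (fun x : ℕ => ((Ocnt p (x + h) : ℝ) - Ocnt p h) / x)
      Filter.atTop (nhds (1 / ((p:ℝ) + 1))) := by
    intro h _
    have hA : Filter.Tendsto (fun x : ℕ => (Ocnt p (x + h) : ℝ) / ((x : ℝ) + h))
        Filter.atTop (nhds (1 / ((p:ℝ) + 1))) := by
      have := (Ocnt_tendsto hp).comp (tendsto_add_atTop_nat h)
      refine this.congr fun x => ?_
      simp only [Function.comp_apply]
      push_cast
      ring_nf
    have hB : Filter.Tendsto (fun x : ℕ => ((x : ℝ) + h) / x) Filter.atTop (nhds 1) := by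
      have h0 := tendsto_const_div_atTop_nhds_zero_nat (h : ℝ)
      have h2 : Filter.Tendsto (fun x : ℕ => 1 + (h : ℝ) / x) Filter.atTop (nhds (1 + 0)) :=
        tendsto_const_nhds.add h0
      rw [add_zero] at h2
      refine h2.congr' ?_
      filter_upwards [Filter.eventually_ge_atTop 1] with x hx
      have hx0 : (x : ℝ) ≠ 0 := by positivity
      field_simp
    have h1 : Filter.Tendsto (fun x : ℕ => (Ocnt p (x + h) : ℝ) / x)
        Filter.atTop (nhds (1 / ((p:ℝ) + 1))) := by
      have := hA.mul hB
      rw [mul_one] at this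
      refine this.congr' ?_
      filter_upwards [Filter.eventually_ge_atTop 1] with x hx
      have hx0 : (x : ℝ) ≠ 0 := by positivity
      have hxh0 : (x : ℝ) + h ≠ 0 := by positivity
      field_simp
    have h0 := tendsto_const_div_atTop_nhds_zero_nat ((Ocnt p h : ℕ) : ℝ)
    have := h1.sub h0
    rw [sub_zero] at this
    refine this.congr fun x => ?_
    rw [sub_div]
  unfold HasDensity
  have heq : (fun x : ℕ => (countIn (NPH {p} H) x : ℝ) / x)
      = fun x : ℕ => ∑ h ∈ H, ((Ocnt p (x + h) : ℝ) - Ocnt p h) / x := by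
    funext x; rw [hcount x, Finset.sum_div]
  rw [heq]
  have hval : ∑ _h ∈ H, (1 / ((p:ℝ) + 1)) = (H.card : ℝ) / ((p : ℝ) + 1) := by
    rw [Finset.sum_const, nsmul_eq_mul]; ring
  rw [← hval]
  exact tendsto_finset_sum H hterm
end

section
/- Let P be a non-empty set of primes, so that λ_P : ℕ → {±1} is a non-constant completely multiplicative function, and let H = {h₁,…,h_d} be a non-empty finite set of non-negative integers. Then liminf_{x→∞} (1/x) Σ_{n≤x} λ_P(n+h₁)⋯λ_P(n+h_d) < 1 and limsup_{x→∞} (1/x) Σ_{n≤x} λ_P(n+h₁)⋯λ_P(n+h_d) > -1. -/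
open Filter Topology
open scoped symmDiff Classical

/-!
Encode `H` by `f = ∑_{h ∈ H} X^h ∈ 𝔽₂[X]`. Since `𝔽₂[X]/(f)` is finite, two powers of `X` agree
modulo `f`, so some multiple `f g` equals `X^a + X^(a+c)` with `c ≥ 1`. Because `λ_P² = 1`, the
map `q ↦ ∏_{j ∈ supp q} λ_P(n + j)` turns sums in `𝔽₂[X]` into products, and hence
`∏_{k ∈ supp g} Λ_P^H(n + k) = λ_P(n + a) λ_P(n + a + c)`.

If the Cesàro means of `Λ_P^H` tended to `ε = ±1`, so would those of each of its shifts, and by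
`1 - ∏ aᵢ ≤ ∑ (1 - aᵢ)` on `[-1, 1]` the means of the product over `supp g` would tend to `±1`.
The means of `λ_P(n) λ_P(n + c)` would then have absolute value tending to `1`, contradicting the
Matomäki–Radziwiłł bound. As `|Λ_P^H| ≤ 1`, a liminf `≥ 1` or a limsup `≤ -1` would force exactly
such convergence.
-/

open Polynomial

theorem Finset.prod_symmDiff_of_mul_self {ι M : Type*} [DecidableEq ι] [CommMonoid M]
    {f : ι → M} (hf : ∀ i, f i * f i = 1) (s t : Finset ι) :
    ∏ i ∈ s ∆ t, f i = (∏ i ∈ s, f i) * ∏ i ∈ t, f i := by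
  have hdisj : Disjoint (s ∆ t) (s ∩ t) := disjoint_symmDiff_inf s t
  rw [← prod_union_inter, show s ∪ t = s ∆ t ∪ s ∩ t from (symmDiff_sup_inf s t).symm,
    prod_union hdisj, mul_assoc, ← prod_mul_distrib,
    prod_congr rfl fun i _ => hf i, prod_const_one, mul_one]

namespace Polynomial

theorem Monic.exists_dvd_X_pow_add_sub_X_pow {R : Type*} [CommRing R] [Finite R]
    {f : R[X]} (hf : f.Monic) : ∃ a c : ℕ, 0 < c ∧ f ∣ X ^ (a + c) - X ^ a := by
  have := hf.finite_adjoinRoot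
  have : Finite (AdjoinRoot f) := Module.finite_of_finite R
  obtain ⟨i, j, hij, h⟩ :=
    Finite.exists_ne_map_eq_of_infinite fun n : ℕ => AdjoinRoot.root f ^ n
  wlog hlt : i < j generalizing i j
  · exact this j i hij.symm h.symm (by omega)
  refine ⟨i, j - i, by omega, ?_⟩
  rw [Nat.add_sub_cancel' hlt.le, ← AdjoinRoot.mk_eq_mk]
  simpa using h.symm

theorem exists_dvd_X_pow_add_sub_X_pow {F : Type*} [Field F] [Finite F] {f : F[X]}
    (hf : f ≠ 0) : ∃ a c : ℕ, 0 < c ∧ f ∣ X ^ (a + c) - X ^ a := by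
  obtain ⟨a, c, hc, h⟩ := (monic_mul_leadingCoeff_inv hf).exists_dvd_X_pow_add_sub_X_pow
  exact ⟨a, c, hc, (dvd_mul_right f _).trans h⟩

theorem support_mul_X_pow {R : Type*} [Semiring R] (p : R[X]) (k : ℕ) :
    (p * X ^ k).support = p.support.map (addRightEmbedding k) := by
  ext j
  simp only [mem_support_iff, Finset.mem_map, addRightEmbedding_apply, coeff_mul_X_pow']
  constructor
  · intro hj
    split_ifs at hj with hk
    · exact ⟨j - k, hj, by omega⟩
    · exact absurd rfl hj
  · rintro ⟨i, hi, rfl⟩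
    simpa using hi

theorem support_add_zmod_two (p q : (ZMod 2)[X]) :
    (p + q).support = p.support ∆ q.support := by
  ext j
  simp only [mem_support_iff, coeff_add, Finset.mem_symmDiff]
  generalize p.coeff j = a
  generalize q.coeff j = b
  decide +revert

theorem sum_X_pow_support_zmod_two (p : (ZMod 2)[X]) : ∑ k ∈ p.support, X ^ k = p := by
  conv_rhs => rw [p.as_sum_support]
  refine Finset.sum_congr rfl fun k hk => ?_
  have hk : p.coeff k ≠ 0 := mem_support_iff.mp hk
  rw [X_pow_eq_monomial]
  congr
  generalize p.coeff k = a at hk ⊢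
  revert a
  decide

theorem support_sum_X_pow {R : Type*} [Semiring R] [Nontrivial R] (s : Finset ℕ) :
    (∑ k ∈ s, X ^ k : R[X]).support = s := by
  ext j
  simp [coeff_X_pow]

end Polynomial

section ShiftProd

variable {M : Type*} [CommMonoid M]

noncomputable def shiftProd (u : ℕ → M) (q : (ZMod 2)[X]) (n : ℕ) : M :=
  ∏ j ∈ q.support, u (n + j)

variable {u : ℕ → M}

theorem shiftProd_add (hu : ∀ n, u n * u n = 1) (p q : (ZMod 2)[X]) (n : ℕ) :
    shiftProd u (p + q) n = shiftProd u p n * shiftProd u q n := by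
  rw [shiftProd, support_add_zmod_two, Finset.prod_symmDiff_of_mul_self fun j => hu (n + j)]
  rfl

theorem shiftProd_mul_X_pow (p : (ZMod 2)[X]) (k n : ℕ) :
    shiftProd u (p * X ^ k) n = shiftProd u p (n + k) := by
  simp only [shiftProd, support_mul_X_pow, Finset.prod_map, addRightEmbedding_apply, add_assoc,
    add_comm k]

theorem shiftProd_X_pow (k n : ℕ) : shiftProd u (X ^ k) n = u (n + k) := by
  simp [shiftProd, support_X_pow]

theorem shiftProd_mul (hu : ∀ n, u n * u n = 1) (p q : (ZMod 2)[X]) (n : ℕ) :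
    shiftProd u (p * q) n = ∏ k ∈ q.support, shiftProd u p (n + k) := by
  suffices ∀ s : Finset ℕ,
      shiftProd u (p * ∑ k ∈ s, X ^ k) n = ∏ k ∈ s, shiftProd u p (n + k) by
    simpa only [sum_X_pow_support_zmod_two] using this q.support
  intro s
  induction s using Finset.induction_on with
  | empty => simp [shiftProd]
  | insert k s hk ih =>
    rw [Finset.sum_insert hk, Finset.prod_insert hk, mul_add, shiftProd_add hu, ih,
      shiftProd_mul_X_pow]

theorem exists_prod_prod_shift_eq_mul_shift (hu : ∀ n, u n * u n = 1) {H : Finset ℕ}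
    (hH : H.Nonempty) : ∃ a c : ℕ, 0 < c ∧ ∃ K : Finset ℕ,
      ∀ n, ∏ k ∈ K, ∏ h ∈ H, u (n + k + h) = u (n + a) * u (n + a + c) := by
  set f : (ZMod 2)[X] := ∑ h ∈ H, X ^ h
  have hf : f.support = H := support_sum_X_pow H
  obtain ⟨a, c, hc, g, hg⟩ := exists_dvd_X_pow_add_sub_X_pow (f := f) (by
    rw [← support_nonempty, hf]; exact hH)
  refine ⟨a, c, hc, g.support, fun n => ?_⟩
  have := shiftProd_mul hu f g n
  rw [← hg, CharTwo.sub_eq_add, shiftProd_add hu, shiftProd_X_pow, shiftProd_X_pow] at this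
  rw [mul_comm, add_assoc, this]
  simp only [shiftProd, hf]

end ShiftProd

theorem abs_prod_le_one {ι : Type*} (s : Finset ι) {a : ι → ℝ} (ha : ∀ i ∈ s, |a i| ≤ 1) :
    |∏ i ∈ s, a i| ≤ 1 := by
  rw [Finset.abs_prod]
  exact Finset.prod_le_one (fun i _ => abs_nonneg _) ha

theorem one_sub_prod_le_sum_one_sub {ι : Type*} (s : Finset ι) {a : ι → ℝ}
    (ha : ∀ i ∈ s, |a i| ≤ 1) : 1 - ∏ i ∈ s, a i ≤ ∑ i ∈ s, (1 - a i) := by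
  classical
  induction s using Finset.induction_on with
  | empty => simp
  | insert j s hj ih =>
    rw [Finset.prod_insert hj, Finset.sum_insert hj]
    have hj1 := abs_le.mp (ha j (Finset.mem_insert_self j s))
    have hs := fun i hi => ha i (Finset.mem_insert_of_mem hi)
    have hp := abs_le.mp (abs_prod_le_one s hs)
    -- `1 - xy = (1 - x) + x (1 - y) ≤ (1 - x) + (1 - y)` for `x, y ∈ [-1, 1]`
    nlinarith [ih hs]

noncomputable def cesaroMean (u : ℕ → ℝ) (x : ℕ) : ℝ :=
  (∑ n ∈ Finset.Icc 1 x, u n) / x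

theorem cesaroMean_sub (u v : ℕ → ℝ) :
    cesaroMean (fun n => u n - v n) = fun x => cesaroMean u x - cesaroMean v x := by
  ext x
  simp only [cesaroMean, Finset.sum_sub_distrib, sub_div]

theorem cesaroMean_const_mul (c : ℝ) (u : ℕ → ℝ) :
    cesaroMean (fun n => c * u n) = fun x => c * cesaroMean u x := by
  ext x
  simp only [cesaroMean, ← Finset.mul_sum, mul_div_assoc]

theorem cesaroMean_sum {ι : Type*} (s : Finset ι) (u : ι → ℕ → ℝ) :
    cesaroMean (fun n => ∑ i ∈ s, u i n) = fun x => ∑ i ∈ s, cesaroMean (u i) x := by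
  ext x
  simp only [cesaroMean, Finset.sum_comm (s := Finset.Icc 1 x), Finset.sum_div]

theorem cesaroMean_mono {u v : ℕ → ℝ} (h : ∀ n, u n ≤ v n) (x : ℕ) :
    cesaroMean u x ≤ cesaroMean v x :=
  div_le_div_of_nonneg_right (Finset.sum_le_sum fun n _ => h n) x.cast_nonneg

theorem abs_cesaroMean_le {u : ℕ → ℝ} {C : ℝ} (hu : ∀ n, |u n| ≤ C) (x : ℕ) :
    |cesaroMean u x| ≤ C := by
  rcases Nat.eq_zero_or_pos x with rfl | hx
  · simpa [cesaroMean] using (abs_nonneg _).trans (hu 0)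
  · have hx' : (0 : ℝ) < x := Nat.cast_pos.mpr hx
    rw [cesaroMean, abs_div, Nat.abs_cast, div_le_iff₀ hx']
    calc |∑ n ∈ Finset.Icc 1 x, u n| ≤ ∑ n ∈ Finset.Icc 1 x, |u n| :=
          Finset.abs_sum_le_sum_abs _ _
      _ ≤ ∑ n ∈ Finset.Icc 1 x, C := Finset.sum_le_sum fun n _ => hu n
      _ = C * x := by simp [mul_comm]

theorem tendsto_cesaroMean_const (c : ℝ) : Tendsto (cesaroMean fun _ => c) atTop (𝓝 c) := by
  refine tendsto_const_nhds.congr' ?_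
  filter_upwards [eventually_gt_atTop 0] with x hx
  have hx' : (x : ℝ) ≠ 0 := Nat.cast_ne_zero.mpr hx.ne'
  simp [cesaroMean, hx']

theorem tendsto_cesaroMean_shift_one_sub {u : ℕ → ℝ} {C : ℝ} (hu : ∀ n, |u n| ≤ C) :
    Tendsto (fun x => cesaroMean (fun n => u (n + 1)) x - cesaroMean u x) atTop (𝓝 0) := by
  have htel : ∀ x,
      ∑ n ∈ Finset.Icc 1 x, u (n + 1) - ∑ n ∈ Finset.Icc 1 x, u n = u (x + 1) - u 1 := by
    intro x
    induction x with
    | zero => simp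
    | succ x ih =>
      rw [Finset.sum_Icc_succ_top (by omega), Finset.sum_Icc_succ_top (by omega)]
      linarith
  refine squeeze_zero_norm (a := fun x : ℕ => 2 * C / x) (fun x => ?_)
    (tendsto_const_div_atTop_nhds_zero_nat _)
  rw [← congrFun (cesaroMean_sub _ _) x, cesaroMean, Real.norm_eq_abs, abs_div, Nat.abs_cast,
    Finset.sum_sub_distrib, htel]
  gcongr
  exact (abs_sub _ _).trans (by linarith [hu (x + 1), hu 1])

theorem tendsto_cesaroMean_shift_sub {u : ℕ → ℝ} {C : ℝ} (hu : ∀ n, |u n| ≤ C) (k : ℕ) :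
    Tendsto (fun x => cesaroMean (fun n => u (n + k)) x - cesaroMean u x) atTop (𝓝 0) := by
  induction k with
  | zero => simp
  | succ k ih =>
    simpa only [add_right_comm _ 1 k, add_assoc, sub_add_sub_cancel, zero_add] using
      (tendsto_cesaroMean_shift_one_sub fun n => hu (n + k)).add ih

theorem tendsto_cesaroMean_shift_iff {u : ℕ → ℝ} {C : ℝ} (hu : ∀ n, |u n| ≤ C) (k : ℕ)
    {L : ℝ} :
    Tendsto (cesaroMean fun n => u (n + k)) atTop (𝓝 L) ↔ Tendsto (cesaroMean u) atTop (𝓝 L) :=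
  ⟨fun h => by simpa using h.sub (tendsto_cesaroMean_shift_sub hu k),
    fun h => by simpa using (tendsto_cesaroMean_shift_sub hu k).add h⟩

theorem tendsto_cesaroMean_prod_of_tendsto_one {ι : Type*} (s : Finset ι) {v : ι → ℕ → ℝ}
    (hv : ∀ i ∈ s, ∀ n, |v i n| ≤ 1) (h : ∀ i ∈ s, Tendsto (cesaroMean (v i)) atTop (𝓝 1)) :
    Tendsto (cesaroMean fun n => ∏ i ∈ s, v i n) atTop (𝓝 1) := by
  have hdefect : Tendsto (cesaroMean fun n => ∑ i ∈ s, (1 - v i n)) atTop (𝓝 0) := by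
    simp only [cesaroMean_sum, cesaroMean_sub]
    simpa using tendsto_finsetSum s fun i hi => (tendsto_cesaroMean_const 1).sub (h i hi)
  have hprod_defect : Tendsto (cesaroMean fun n => 1 - ∏ i ∈ s, v i n) atTop (𝓝 0) := by
    refine squeeze_zero (fun x => ?_) (fun x => cesaroMean_mono (fun n =>
      one_sub_prod_le_sum_one_sub s fun i hi => hv i hi n) x) hdefect
    exact div_nonneg (Finset.sum_nonneg fun n _ => sub_nonneg.mpr
      (abs_le.mp (abs_prod_le_one s fun i hi => hv i hi n)).2) x.cast_nonneg
  have := (tendsto_cesaroMean_const 1).sub hprod_defect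
  simpa only [← cesaroMean_sub, sub_sub_cancel, sub_zero] using this

theorem tendsto_cesaroMean_prod_shift {u : ℕ → ℝ} (hu : ∀ n, |u n| ≤ 1) {ε : ℝ} (hε : |ε| = 1)
    (h : Tendsto (cesaroMean u) atTop (𝓝 ε)) (K : Finset ℕ) :
    Tendsto (cesaroMean fun n => ∏ k ∈ K, u (n + k)) atTop (𝓝 (ε ^ K.card)) := by
  have hεε : ε * ε = 1 := by rw [← abs_mul_abs_self, hε, one_mul]
  have hone : Tendsto (cesaroMean fun n => ∏ k ∈ K, ε * u (n + k)) atTop (𝓝 1) := by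
    refine tendsto_cesaroMean_prod_of_tendsto_one K (fun k _ n => ?_) fun k _ => ?_
    · rw [abs_mul, hε, one_mul]
      exact hu (n + k)
    · rw [cesaroMean_const_mul, ← hεε]
      exact ((tendsto_cesaroMean_shift_iff hu k).mpr h).const_mul ε
  have hσσ : ε ^ K.card * ε ^ K.card = 1 := by rw [← mul_pow, hεε, one_pow]
  simp only [Finset.prod_mul_distrib, Finset.prod_const, cesaroMean_const_mul] at hone
  simpa only [← mul_assoc, hσσ, one_mul, mul_one] using hone.const_mul (ε ^ K.card)

theorem liminf_lt_of_not_tendsto {v : ℕ → ℝ} {C : ℝ} (hv : ∀ x, |v x| ≤ C)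
    (h : ¬Tendsto v atTop (𝓝 C)) : liminf v atTop < C := by
  have hbdd : IsBoundedUnder (· ≤ ·) atTop v :=
    isBoundedUnder_of ⟨C, fun x => (abs_le.mp (hv x)).2⟩
  have hbdd' : IsBoundedUnder (· ≥ ·) atTop v :=
    isBoundedUnder_of ⟨-C, fun x => (abs_le.mp (hv x)).1⟩
  by_contra! hle
  exact h (tendsto_of_le_liminf_of_limsup_le hle
    (limsup_le_of_le hbdd'.isCoboundedUnder_le (.of_forall fun x => (abs_le.mp (hv x)).2)))

theorem lt_limsup_of_not_tendsto {v : ℕ → ℝ} {C : ℝ} (hv : ∀ x, |v x| ≤ C)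
    (h : ¬Tendsto v atTop (𝓝 (-C))) : -C < limsup v atTop := by
  have hbdd : IsBoundedUnder (· ≤ ·) atTop v :=
    isBoundedUnder_of ⟨C, fun x => (abs_le.mp (hv x)).2⟩
  have hbdd' : IsBoundedUnder (· ≥ ·) atTop v :=
    isBoundedUnder_of ⟨-C, fun x => (abs_le.mp (hv x)).1⟩
  by_contra! hle
  exact h (tendsto_of_le_liminf_of_limsup_le
    (le_liminf_of_le hbdd.isCoboundedUnder_ge (.of_forall fun x => (abs_le.mp (hv x)).1)) hle)

theorem not_tendsto_cesaroMean_prod_shift {u : ℕ → ℝ} (hu : ∀ n, |u n| = 1) {H : Finset ℕ}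
    (hH : H.Nonempty) (hcorr : ∀ c : ℕ, 1 ≤ c →
      limsup (fun x => |cesaroMean (fun n => u n * u (n + c)) x|) atTop < 1)
    {ε : ℝ} (hε : |ε| = 1) : ¬Tendsto (cesaroMean fun n => ∏ h ∈ H, u (n + h)) atTop (𝓝 ε) := by
  intro hT
  have hsq : ∀ n, u n * u n = 1 := fun n => by rw [← abs_mul_abs_self, hu, one_mul]
  obtain ⟨a, c, hc, K, hK⟩ := exists_prod_prod_shift_eq_mul_shift hsq hH
  have hprod := tendsto_cesaroMean_prod_shift
    (fun n => abs_prod_le_one H fun h _ => (hu (n + h)).le) hε hT K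
  simp only [hK] at hprod
  have hcorr_le : ∀ n, |u n * u (n + c)| ≤ 1 := fun n => by rw [abs_mul, hu, hu, one_mul]
  have hlim := ((tendsto_cesaroMean_shift_iff hcorr_le a).mp hprod).abs
  rw [abs_pow, hε, one_pow] at hlim
  exact (hcorr c hc).ne hlim.limsup_eq

theorem abs_lambdaP (P : Set ℕ) (n : ℕ) : |lambdaP P n| = 1 :=
  abs_neg_one_pow _

/-- Assuming the Matomäki–Radziwiłł two-point bound, for non-empty `P`
(so `λ_P` is non-constant) and non-empty finite `H`, the liminf of the Cesàro averages
of `Λ_P^H` is `< 1` and the limsup is `> -1`. -/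
theorem stmt_4
    (hMR : ∀ Q : Set ℕ, (∀ q ∈ Q, Nat.Prime q) → Q.Nonempty → ∀ h : ℕ, 1 ≤ h →
      Filter.limsup (fun x : ℕ =>
        |(∑ n ∈ Finset.Icc 1 x, lambdaP Q n * lambdaP Q (n + h)) / (x : ℝ)|)
        Filter.atTop < 1)
    (P : Set ℕ) (hP : ∀ q ∈ P, Nat.Prime q) (hPne : P.Nonempty)
    (H : Finset ℕ) (hH : H.Nonempty) :
    Filter.liminf (cesaroAvg P H) Filter.atTop < 1 ∧
    Filter.limsup (cesaroAvg P H) Filter.atTop > -1 := by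
  have hbound : ∀ x, |cesaroAvg P H x| ≤ 1 :=
    abs_cesaroMean_le fun n => abs_prod_le_one H fun h _ => (abs_lambdaP P (n + h)).le
  have hnot : ∀ ε : ℝ, |ε| = 1 → ¬Tendsto (cesaroAvg P H) atTop (𝓝 ε) := fun ε hε =>
    not_tendsto_cesaroMean_prod_shift (abs_lambdaP P) hH (hMR P hP hPne) hε
  exact ⟨liminf_lt_of_not_tendsto hbound (hnot 1 abs_one),
    lt_limsup_of_not_tendsto hbound (hnot (-1) (by rw [abs_neg, abs_one]))⟩
end

section
/- Let 𝓗 be a non-empty collection of finite subsets of the non-negative integers that is closed under symmetric difference and under translation (if H ∈ 𝓗 and a ∈ ℤ with H + a ⊆ ℕ₀, then H + a ∈ 𝓗), and suppose 𝓗 contains at least one non-empty set. Then 𝓗 contains a set with exactly two elements. -/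
open Filter Topology
open scoped symmDiff Classical

section Stmt17Aux

open Polynomial

/-- Over `ZMod 2`, support of a sum is the symmetric difference of supports. -/
private lemma support_add_symmDiff (p q : Polynomial (ZMod 2)) :
    (p + q).support = p.support ∆ q.support := by
  ext n
  simp only [Polynomial.mem_support_iff, Finset.mem_symmDiff, Polynomial.coeff_add]
  have key : ∀ a b : ZMod 2, a + b ≠ 0 ↔ ((a ≠ 0 ∧ ¬ b ≠ 0) ∨ (b ≠ 0 ∧ ¬ a ≠ 0)) := by decide
  exact key _ _

private lemma support_X_pow_mul (n : ℕ) (p : Polynomial (ZMod 2)) :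
    (X ^ n * p).support = p.support.image (· + n) := by
  ext m
  simp only [Polynomial.mem_support_iff, Finset.mem_image]
  constructor
  · intro h
    rcases le_or_gt n m with hle | hlt
    · refine ⟨m - n, ?_, by omega⟩
      have : m - n + n = m := by omega
      rw [← Polynomial.coeff_X_pow_mul p n (m - n), this]
      exact h
    · exfalso; apply h
      rw [Polynomial.coeff_X_pow_mul']
      simp [Nat.not_le.mpr hlt]
  · rintro ⟨d, hd, rfl⟩
    rwa [Polynomial.coeff_X_pow_mul]

end Stmt17Aux

/-- Wildon: a non-empty collection of finite subsets of `ℕ₀`, closed under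
symmetric difference and translation and containing a non-empty set, contains a set of
exactly two elements. -/
theorem stmt_17 (𝓗 : Set (Finset ℕ)) (hne : 𝓗.Nonempty)
    (hsymm : ∀ H₁ ∈ 𝓗, ∀ H₂ ∈ 𝓗, H₁ ∆ H₂ ∈ 𝓗)
    (htrans : ∀ H ∈ 𝓗, ∀ a : ℤ, (∀ h ∈ H, 0 ≤ (h : ℤ) + a) →
      H.image (fun h => ((h : ℤ) + a).toNat) ∈ 𝓗)
    (hcontains : ∃ H ∈ 𝓗, H.Nonempty) :
    ∃ H ∈ 𝓗, H.card = 2 := by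
  classical
  -- ∅ ∈ 𝓗
  obtain ⟨H₀, hH₀, hH₀ne⟩ := hcontains
  have hempty : (∅ : Finset ℕ) ∈ 𝓗 := by
    have := hsymm H₀ hH₀ H₀ hH₀
    simpa [symmDiff_self] using this
  -- shift closure
  have hshift : ∀ H ∈ 𝓗, ∀ n : ℕ, H.image (· + n) ∈ 𝓗 := by
    intro H hH n
    have := htrans H hH (n : ℤ) (fun h _ => by positivity)
    refine Set.mem_of_eq_of_mem ?_ this
    ext x
    simp
    constructor
    · rintro ⟨a, ha, rfl⟩
      exact ⟨a, ha, by omega⟩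
    · rintro ⟨a, ha, rfl⟩
      exact ⟨a, ha, by omega⟩
  -- the polynomial of H₀
  set f : Polynomial (ZMod 2) := ∑ h ∈ H₀, Polynomial.X ^ h with hf
  have hfsupp : f.support = H₀ := by
    ext n
    simp only [Polynomial.mem_support_iff, hf, Polynomial.finset_sum_coeff,
      Polynomial.coeff_X_pow]
    rw [Finset.sum_ite_eq H₀ n (fun _ => (1 : ZMod 2))]
    by_cases h : n ∈ H₀ <;> simp [h]
  have hfne : f ≠ 0 := by
    intro h
    rw [h] at hfsupp
    simp only [Polynomial.support_zero] at hfsupp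
    exact hH₀ne.ne_empty hfsupp.symm
  have hfmonic : f.Monic := by
    have h1 : f.leadingCoeff ≠ 0 := Polynomial.leadingCoeff_ne_zero.mpr hfne
    exact (by decide : ∀ a : ZMod 2, a ≠ 0 → a = 1) _ h1
  -- closure under multiples: (g * f).support ∈ 𝓗 for all g
  have hmul : ∀ g : Polynomial (ZMod 2), (g * f).support ∈ 𝓗 := by
    intro g
    induction g using Polynomial.induction_on' with
    | add p q hp hq =>
      rw [add_mul, support_add_symmDiff]
      exact hsymm _ hp _ hq
    | monomial n a =>
      have := (by decide : ∀ a : ZMod 2, a = 0 ∨ a = 1) a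
      rcases this with rfl | rfl
      · simpa using hempty
      · rw [← Polynomial.X_pow_eq_monomial, support_X_pow_mul, hfsupp]
        exact hshift H₀ hH₀ n
  -- pigeonhole: two powers of X with the same remainder mod f
  have hfin : ∃ i j : ℕ, i ≠ j ∧
      (Polynomial.X ^ i %ₘ f : Polynomial (ZMod 2)) = Polynomial.X ^ j %ₘ f := by
    obtain ⟨i, j, hij, heq⟩ := Finite.exists_ne_map_eq_of_infinite
      (fun n : ℕ => fun k : Fin f.natDegree => ((Polynomial.X ^ n %ₘ f).coeff k : ZMod 2))
    refine ⟨i, j, hij, ?_⟩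
    ext m
    by_cases hm : m < f.natDegree
    · exact congrFun heq ⟨m, hm⟩
    · have hd : f.degree = (f.natDegree : WithBot ℕ) := Polynomial.degree_eq_natDegree hfne
      have h1 : (Polynomial.X ^ i %ₘ f).coeff m = 0 := by
        apply Polynomial.coeff_eq_zero_of_degree_lt
        calc (Polynomial.X ^ i %ₘ f).degree < f.degree := Polynomial.degree_modByMonic_lt _ hfmonic
          _ ≤ (m : WithBot ℕ) := by
              rw [hd]; exact_mod_cast Nat.le_of_not_lt hm
      have h2 : (Polynomial.X ^ j %ₘ f).coeff m = 0 := by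
        apply Polynomial.coeff_eq_zero_of_degree_lt
        calc (Polynomial.X ^ j %ₘ f).degree < f.degree := Polynomial.degree_modByMonic_lt _ hfmonic
          _ ≤ (m : WithBot ℕ) := by
              rw [hd]; exact_mod_cast Nat.le_of_not_lt hm
      rw [h1, h2]
  obtain ⟨i, j, hij, heq⟩ := hfin
  -- f divides X^i + X^j
  have hdvd : f ∣ (Polynomial.X ^ i + Polynomial.X ^ j : Polynomial (ZMod 2)) := by
    rw [← Polynomial.modByMonic_eq_zero_iff_dvd hfmonic, Polynomial.add_modByMonic, heq]
    have : (Polynomial.X ^ j %ₘ f : Polynomial (ZMod 2)) + Polynomial.X ^ j %ₘ f = 0 := by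
      have h2 : ∀ a : ZMod 2, a + a = 0 := by decide
      ext m
      simp [h2]
    exact this
  obtain ⟨g, hg⟩ := hdvd
  refine ⟨(g * f).support, hmul g, ?_⟩
  have : g * f = Polynomial.X ^ i + Polynomial.X ^ j := by rw [mul_comm] at hg; exact hg.symm
  rw [this]
  have hsupp : (Polynomial.X ^ i + Polynomial.X ^ j : Polynomial (ZMod 2)).support = {i, j} := by
    have := Polynomial.support_binomial (R := ZMod 2) hij
      (x := 1) (y := 1) one_ne_zero one_ne_zero
    simpa using this
  rw [hsupp, Finset.card_insert_of_notMem (by simpa using hij), Finset.card_singleton]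
end
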